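/- Let ν > 1 and 0 < r₋ < r₊ be real numbers, and let r > r₊. Set s := √(r₊ r₋ (ν²+3)), R²(r) := (r/4)·[3(ν²−1)r + (ν²+3)(r₊+r₋) − 4νs], N²(r) := (ν²+3)(r−r₊)(r−r₋)/(4R²(r)), N^θ(r) := (2νr − s)/(2R²(r)), Ω_H := −2/(2νr₊ − s), κ₊ := |Ω_H|(ν²+3)(r₊−r₋)/4, and z := (r−r₊)/(r−r₋). Then for all integers n and k the following identity of complex numbers holds: (R²(r)/N²(r))·(κ₊n + ik(N^θ(r)+Ω_H))² + k² = (2κ₊/(|Ω_H| N(r)))² · [z/((1−z)²(ν²+3))]·[(κ₊n + ik(N^θ(r)+Ω_H))²/N²(r) + k²/R²(r)]. In particular, the Minkowski WKB function χ²_𝕄(ρ(r)) with ρ(r)=R(r)/N(r), temperature 2πT=κ₊ and angular velocity Ω = N^θ(r)+Ω_H is an (n,k)-independent positive multiple of the black-hole WKB function χ²_BH(z). -/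

import Mathlib

/-- s := √(r₊ r₋ (ν²+3)). -/
noncomputable def sBH (ν rp rm : ℝ) : ℝ := Real.sqrt (rp * rm * (ν ^ 2 + 3))

/-- R²(r) := (r/4)·[3(ν²−1)r + (ν²+3)(r₊+r₋) − 4νs]. -/
noncomputable def R2 (ν rp rm r : ℝ) : ℝ :=
  r / 4 * (3 * (ν ^ 2 - 1) * r + (ν ^ 2 + 3) * (rp + rm) - 4 * ν * sBH ν rp rm)

/-- N²(r) := (ν²+3)(r−r₊)(r−r₋)/(4R²(r)). -/
noncomputable def N2 (ν rp rm r : ℝ) : ℝ :=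
  (ν ^ 2 + 3) * (r - rp) * (r - rm) / (4 * R2 ν rp rm r)

/-- N^θ(r) := (2νr − s)/(2R²(r)). -/
noncomputable def Nθ (ν rp rm r : ℝ) : ℝ :=
  (2 * ν * r - sBH ν rp rm) / (2 * R2 ν rp rm r)

/-- Ω_H := −2/(2νr₊ − s). -/
noncomputable def ΩH (ν rp rm : ℝ) : ℝ := -2 / (2 * ν * rp - sBH ν rp rm)

/-- κ₊ := |Ω_H|(ν²+3)(r₊−r₋)/4. -/
noncomputable def κBH (ν rp rm : ℝ) : ℝ := |ΩH ν rp rm| * (ν ^ 2 + 3) * (rp - rm) / 4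

/-- z := (r−r₊)/(r−r₋). -/
noncomputable def zBH (rp rm r : ℝ) : ℝ := (r - rp) / (r - rm)

/-!
Two closed forms make the prefactor collapse: `κ₊ / |Ω_H| = (ν²+3)(r₊−r₋)/4` and
`z / (1−z)² = (r−r₊)(r−r₋)/(r₊−r₋)²`. Together with the definition of `N²` they turn
`(2κ₊/(|Ω_H| N))² · z/((1−z)²(ν²+3))` into `(ν²+3)(r−r₊)(r−r₋)/(4N²) = R²`, and then the identity
is just `R² · (X/N² + k²/R²) = (R²/N²) X + k²`. The divisions are legitimate because `R² > 0`,
by the AM–GM bound `4νs ≤ 4ν²r₊ + (ν²+3)r₋`, and `Ω_H < 0`, by `s < 2νr₊`; both come from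
`s² = r₊r₋(ν²+3)`.
-/

lemma sBH_sq {ν rp rm : ℝ} (hrp : 0 ≤ rp) (hrm : 0 ≤ rm) :
    sBH ν rp rm ^ 2 = rp * rm * (ν ^ 2 + 3) :=
  Real.sq_sqrt (by positivity)

lemma four_mul_sBH_le {ν rp rm : ℝ} (hrp : 0 < rp) (hrm : 0 ≤ rm) :
    4 * ν * sBH ν rp rm ≤ 4 * ν ^ 2 * rp + (ν ^ 2 + 3) * rm := by
  have hs := sBH_sq (ν := ν) hrp.le hrm
  -- multiplied by `r₊`, this is `(2νr₊ − s)² ≥ 0`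
  refine le_of_mul_le_mul_left ?_ hrp
  nlinarith [sq_nonneg (2 * ν * rp - sBH ν rp rm)]

lemma sBH_lt {ν rp rm : ℝ} (hν : 1 < ν) (hrm : 0 ≤ rm) (hr : rm < rp) :
    sBH ν rp rm < 2 * ν * rp := by
  have hrp : 0 < rp := hrm.trans_lt hr
  have hs := sBH_sq (ν := ν) hrp.le hrm
  refine lt_of_pow_lt_pow_left₀ 2 (by positivity) ?_
  rw [hs]
  nlinarith [mul_lt_mul_of_pos_left hr hrp, mul_pos hrp (show 0 < ν ^ 2 - 1 by nlinarith)]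

lemma ΩH_neg {ν rp rm : ℝ} (hν : 1 < ν) (hrm : 0 ≤ rm) (hr : rm < rp) : ΩH ν rp rm < 0 :=
  div_neg_of_neg_of_pos (by norm_num) (sub_pos.mpr (sBH_lt hν hrm hr))

lemma R2_pos {ν rp rm r : ℝ} (hν : 1 < ν) (hrm : 0 ≤ rm) (hr : rm < rp) (hrr : rp < r) :
    0 < R2 ν rp rm r := by
  have hrp : 0 < rp := hrm.trans_lt hr
  have hs := four_mul_sBH_le (ν := ν) hrp hrm
  have hgap : 0 < 3 * (ν ^ 2 - 1) * (r - rp) :=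
    mul_pos (by nlinarith) (sub_pos.mpr hrr)
  unfold R2
  exact mul_pos (by linarith) (by linarith)

lemma N2_pos {ν rp rm r : ℝ} (hν : 1 < ν) (hrm : 0 ≤ rm) (hr : rm < rp) (hrr : rp < r) :
    0 < N2 ν rp rm r := by
  have hR := R2_pos hν hrm hr hrr
  unfold N2
  exact div_pos (mul_pos (mul_pos (by positivity) (by linarith)) (by linarith)) (by positivity)

lemma κBH_div_abs_ΩH {ν rp rm : ℝ} (hΩ : ΩH ν rp rm ≠ 0) :
    κBH ν rp rm / |ΩH ν rp rm| = (ν ^ 2 + 3) * (rp - rm) / 4 := by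
  unfold κBH
  field_simp

lemma zBH_div_one_sub_sq {rp rm r : ℝ} (hr : rm ≠ rp) (hrr : r ≠ rm) :
    zBH rp rm r / (1 - zBH rp rm r) ^ 2 = (r - rp) * (r - rm) / (rp - rm) ^ 2 := by
  have h1 : 1 - zBH rp rm r = (rp - rm) / (r - rm) := by
    unfold zBH
    field_simp [sub_ne_zero.mpr hrr]
    ring
  rw [h1, zBH]
  field_simp [sub_ne_zero.mpr hrr, sub_ne_zero.mpr hr.symm]

lemma prefactor_eq_R2 {ν rp rm r : ℝ} (hν : 1 < ν) (hrm : 0 ≤ rm) (hr : rm < rp) (hrr : rp < r) :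
    (2 * κBH ν rp rm / (|ΩH ν rp rm| * Real.sqrt (N2 ν rp rm r))) ^ 2 *
      (zBH rp rm r / ((1 - zBH rp rm r) ^ 2 * (ν ^ 2 + 3))) = R2 ν rp rm r := by
  have hR := R2_pos hν hrm hr hrr
  rw [← div_div, mul_div_assoc, κBH_div_abs_ΩH (ΩH_neg hν hrm hr).ne,
    div_pow, Real.sq_sqrt (N2_pos hν hrm hr hrr).le, ← div_div,
    zBH_div_one_sub_sq hr.ne (by linarith), N2]
  have hrpm : rp - rm ≠ 0 := sub_ne_zero.mpr hr.ne'
  have hrrp : r - rp ≠ 0 := sub_ne_zero.mpr hrr.ne'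
  have hrrm : r - rm ≠ 0 := sub_ne_zero.mpr (hr.trans hrr).ne'
  field_simp
  ring

/-- for r > r₊ and all integers n, k, one has the complex identity
(R²/N²)(κ₊n + ik(N^θ+Ω_H))² + k²
  = (2κ₊/(|Ω_H| N))² · [z/((1−z)²(ν²+3))]·[(κ₊n + ik(N^θ+Ω_H))²/N² + k²/R²],
i.e. the Minkowski WKB function χ²_𝕄 with ρ = R/N, 2πT = κ₊, Ω = N^θ+Ω_H is an
(n,k)-independent positive multiple of the black-hole WKB function χ²_BH. -/
theorem stmt8 (ν rp rm : ℝ) (hν : 1 < ν) (hrm : 0 < rm) (hr : rm < rp)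
    (r : ℝ) (hrr : rp < r) (n k : ℤ) :
    ((R2 ν rp rm r : ℂ) / (N2 ν rp rm r : ℂ)) *
        ((κBH ν rp rm : ℂ) * (n : ℂ)
          + Complex.I * (k : ℂ) * ((Nθ ν rp rm r + ΩH ν rp rm : ℝ) : ℂ)) ^ 2
      + (k : ℂ) ^ 2
    = ((2 * κBH ν rp rm / (|ΩH ν rp rm| * Real.sqrt (N2 ν rp rm r)) : ℝ) : ℂ) ^ 2 *
        ((zBH rp rm r / ((1 - zBH rp rm r) ^ 2 * (ν ^ 2 + 3)) : ℝ) : ℂ) *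
        (((κBH ν rp rm : ℂ) * (n : ℂ)
            + Complex.I * (k : ℂ) * ((Nθ ν rp rm r + ΩH ν rp rm : ℝ) : ℂ)) ^ 2
              / (N2 ν rp rm r : ℂ)
          + (k : ℂ) ^ 2 / (R2 ν rp rm r : ℂ)) := by
  have hR : (R2 ν rp rm r : ℂ) ≠ 0 := by exact_mod_cast (R2_pos hν hrm.le hr hrr).ne'
  rw [← Complex.ofReal_pow, ← Complex.ofReal_mul, prefactor_eq_R2 hν hrm.le hr hrr, mul_add,
    mul_div_cancel₀ _ hR, mul_div_assoc']
  ring
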